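/- Let p > 2 be prime, F a finite field of characteristic p, f ≥ 1, and let η ∈ ℤ_p^× be a topological generator of ℤ_p^× acting on F((π)) by η(π) = (1+π)^η − 1. Fix an integer Σ with Σ ≢ −s·(p^f−1)/(p−1) mod p for all s with 2−p ≤ s ≤ −1 and for s = 1−p (equivalently, v_p(Σ + s(p^f−1)/(p−1)) = 0 for these s). Let λ_η be the canonical root as usual. If additionally val((λ_η^Σ η − 1)(π^{1−p})) = 2−p and val((λ_η^Σ η − 1)(π^s)) = s for 2−p ≤ s ≤ −1, then there exist unique ε_{2−p}, …, ε_{−1} ∈ 𝔽_p such that (λ_η^Σ η − 1)(π^{1−p} + ε_{2−p}π^{2−p} + … + ε_{−1}π^{−1}) ∈ F[[π]]. -/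

import Mathlib

noncomputable section

open PowerSeries

/-- Substitution `π ↦ π^k` in a power series. -/
def psubst (F : Type) [Field F] (k : ℕ) (g : PowerSeries F) : PowerSeries F :=
  PowerSeries.mk fun n => if k ∣ n then PowerSeries.coeff (R := F) (n / k) g else 0

/-- Substitution `π ↦ π^k` in a Laurent series (for `k > 0`). -/
def lsubst (F : Type) [Field F] (k : ℕ) (x : LaurentSeries F) : LaurentSeries F :=
  if h : 0 < k then
    HahnSeries.embDomain
      (OrderEmbedding.ofStrictMono (fun n : ℤ => (k : ℤ) * n)
        (fun a b hab => mul_lt_mul_of_pos_left hab (by exact_mod_cast h))) x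
  else x

/-- The monomial `π^s` in the Laurent series field. -/
def T (F : Type) [Field F] (s : ℤ) : LaurentSeries F := HahnSeries.single s 1

/-- Inclusion of power series into Laurent series. -/
def lS (F : Type) [Field F] : PowerSeries F →+* LaurentSeries F := HahnSeries.ofPowerSeries ℤ F

/-- `(1+π)^η` for `η ∈ ℤ_p`, via the binomial series, over a field of characteristic `p`. -/
def binomSeries (F : Type) [Field F] (p : ℕ) [Fact p.Prime] [CharP F p] (η : PadicInt p) :
    PowerSeries F :=
  PowerSeries.mk fun n => ((η.appr (n + 1)).choose n : F)

/-- Composition of power series: `u(g(π))` where `g` has zero constant term. -/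
def pcomp (F : Type) [Field F] (u g : PowerSeries F) : PowerSeries F :=
  PowerSeries.mk fun n =>
    ∑ k ∈ Finset.range (n + 1), PowerSeries.coeff (R := F) k u * PowerSeries.coeff (R := F) n (g ^ k)

/-- Action of `γ` with `χ(γ) = c ∈ ℤ_p` on Laurent series: substitution `π ↦ (1+π)^c - 1`. -/
def act (F : Type) [Field F] (p : ℕ) [Fact p.Prime] [CharP F p] (c : PadicInt p)
    (H : LaurentSeries F) : LaurentSeries F :=
  lS F (binomSeries F p c - 1) ^ H.order *
    lS F (pcomp F H.powerSeriesPart (binomSeries F p c - 1))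

/-- The `π`-adic valuation of `x` is at least `v`. -/
def valGE (F : Type) [Field F] (x : LaurentSeries F) (v : ℤ) : Prop :=
  ∀ n : ℤ, n < v → x.coeff n = 0

/-- Reduction of `c ∈ ℤ_p` mod `p`, viewed in `F`. -/
def redF (F : Type) [Field F] (p : ℕ) [Fact p.Prime] [CharP F p] (c : PadicInt p) : F :=
  ZMod.castHom (dvd_refl p) F (PadicInt.toZMod c)

section Aux

variable (F : Type) [Field F]

lemma T_order (s : ℤ) : (T F s).order = s := HahnSeries.order_single one_ne_zero

lemma T_psp (s : ℤ) : (T F s).powerSeriesPart = 1 := by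
  ext n
  rw [LaurentSeries.powerSeriesPart_coeff, T_order]
  simp only [T, HahnSeries.coeff_single, PowerSeries.coeff_one]
  by_cases h : n = 0 <;> simp [h]

lemma pcomp_one (g : PowerSeries F) : pcomp F 1 g = 1 := by
  ext n
  simp [pcomp, PowerSeries.coeff_one, Finset.sum_ite_eq']

lemma pcomp_add (u v g : PowerSeries F) : pcomp F (u + v) g = pcomp F u g + pcomp F v g := by
  ext n
  simp [pcomp, add_mul, Finset.sum_add_distrib]

lemma pcomp_C_mul (a : F) (u g : PowerSeries F) :
    pcomp F (PowerSeries.C (R := F) a * u) g = PowerSeries.C (R := F) a * pcomp F u g := by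
  ext n
  simp [pcomp, Finset.mul_sum, mul_assoc]

lemma pcomp_X_pow (m : ℕ) (g : PowerSeries F) (hg : constantCoeff (R := F) g = 0) :
    pcomp F (X ^ m) g = g ^ m := by
  ext n
  simp only [pcomp, PowerSeries.coeff_mk, PowerSeries.coeff_X_pow]
  rw [Finset.sum_eq_single m]
  · by_cases h : m ≤ n
    · simp
    · simp only [if_pos rfl, one_mul]
      have : (X : PowerSeries F) ^ m ∣ g ^ m :=
        pow_dvd_pow_of_dvd (PowerSeries.X_dvd_iff.mpr hg) m
      rw [(PowerSeries.X_pow_dvd_iff.mp this) n (by omega)]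
      simp
  · intro k _ hk; simp [hk]
  · intro h
    simp only [Finset.mem_range, not_lt] at h
    have : (X : PowerSeries F) ^ m ∣ g ^ m :=
      pow_dvd_pow_of_dvd (PowerSeries.X_dvd_iff.mpr hg) m
    rw [(PowerSeries.X_pow_dvd_iff.mp this) n (by omega)]
    simp

variable (p : ℕ) [Fact p.Prime] [CharP F p] (c : PadicInt p)

lemma binom_const : constantCoeff (R := F) (binomSeries F p c - 1) = 0 := by
  simp [binomSeries, ← PowerSeries.coeff_zero_eq_constantCoeff, PowerSeries.coeff_one]

lemma act_T (s : ℤ) : act F p c (T F s) = lS F (binomSeries F p c - 1) ^ s := by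
  rw [act, T_order, T_psp, pcomp_one, map_one, mul_one]

lemma CT (a : F) (s : ℤ) : HahnSeries.C a * T F s = HahnSeries.single s a := by
  rw [T, HahnSeries.C_apply, HahnSeries.single_mul_single, zero_add, mul_one]

lemma sum_coeff {α : Type} (s : Finset α) (f : α → LaurentSeries F) (n : ℤ) :
    (∑ i ∈ s, f i).coeff n = ∑ i ∈ s, (f i).coeff n :=
  map_sum (⟨⟨fun x => x.coeff n, rfl⟩, fun _ _ => rfl⟩ :
    LaurentSeries F →+ F) f s

lemma C_mul_coeff (a : F) (x : LaurentSeries F) (n : ℤ) :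
    (HahnSeries.C a * x).coeff n = a * x.coeff n := by
  rw [HahnSeries.C_apply, HahnSeries.single_zero_mul_eq_smul, HahnSeries.coeff_smul, smul_eq_mul]

section H
variable (hp2 : 2 < p) (ε : Fin (p - 2) → F)

def Hfun : LaurentSeries F :=
  T F (1 - (p : ℤ)) + ∑ k : Fin (p - 2), HahnSeries.C (ε k) * T F (2 - (p : ℤ) + (k : ℕ))

lemma Hcoeff (n : ℤ) : (Hfun F p ε).coeff n =
    (if n = 1 - (p : ℤ) then 1 else 0) +
      ∑ k : Fin (p - 2), if n = 2 - (p : ℤ) + (k : ℕ) then ε k else 0 := by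
  rw [Hfun, HahnSeries.coeff_add, sum_coeff]
  congr 1
  · simp [T, HahnSeries.coeff_single]
  · exact Finset.sum_congr rfl fun k _ => by rw [CT]; simp [HahnSeries.coeff_single]

lemma Hcoeff_lead : (Hfun F p ε).coeff (1 - (p : ℤ)) = 1 := by
  rw [Hcoeff, Finset.sum_eq_zero fun k _ => by rw [if_neg (by omega)], add_zero, if_pos rfl]

lemma Hne : Hfun F p ε ≠ 0 := fun h => by
  have := Hcoeff_lead F p ε
  rw [h] at this; simp at this

lemma Hcoeff_low (n : ℤ) (hn : n < 1 - (p : ℤ)) : (Hfun F p ε).coeff n = 0 := by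
  rw [Hcoeff, if_neg (by omega), Finset.sum_eq_zero fun k _ => by rw [if_neg (by omega)],
    add_zero]

lemma Horder : (Hfun F p ε).order = 1 - (p : ℤ) := by
  refine le_antisymm (HahnSeries.order_le_of_coeff_ne_zero (by rw [Hcoeff_lead]; exact one_ne_zero))
    ?_
  by_contra h
  push_neg at h
  exact (mt HahnSeries.coeff_order_eq_zero.mp (Hne F p ε)) (Hcoeff_low F p ε _ h)

lemma Hpsp : (Hfun F p ε).powerSeriesPart =
    1 + ∑ k : Fin (p - 2), PowerSeries.C (R := F) (ε k) * X ^ ((k : ℕ) + 1) := by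
  ext n
  rw [LaurentSeries.powerSeriesPart_coeff, Horder, Hcoeff]
  rw [map_add, PowerSeries.coeff_one]
  congr 1
  · by_cases h : n = 0 <;> simp [h]
  · rw [map_sum]
    refine Finset.sum_congr rfl fun k _ => ?_
    rw [PowerSeries.coeff_C_mul, PowerSeries.coeff_X_pow, mul_ite, mul_one, mul_zero]
    congr 1
    simp only [eq_iff_iff]
    omega

end H

lemma pcomp_zero (g : PowerSeries F) : pcomp F 0 g = 0 := by
  ext n; simp [pcomp]

lemma pcomp_sum {α : Type} (s : Finset α) (f : α → PowerSeries F) (g : PowerSeries F) :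
    pcomp F (∑ i ∈ s, f i) g = ∑ i ∈ s, pcomp F (f i) g :=
  map_sum (⟨⟨fun u => pcomp F u g, pcomp_zero F g⟩, fun a b => pcomp_add F a b g⟩ :
    PowerSeries F →+ PowerSeries F) f s

lemma act_H (ε : Fin (p - 2) → F) (hG : lS F (binomSeries F p c - 1) ≠ 0) :
    act F p c (Hfun F p ε) = act F p c (T F (1 - (p : ℤ))) +
      ∑ k : Fin (p - 2), HahnSeries.C (ε k) * act F p c (T F (2 - (p : ℤ) + (k : ℕ))) := by
  set g := binomSeries F p c - 1 with hg
  set G := lS F g with hGdef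
  rw [act, Horder, Hpsp, pcomp_add, pcomp_one, pcomp_sum, map_add, map_one]
  have h1 : ∀ k : Fin (p - 2), pcomp F (PowerSeries.C (R := F) (ε k) * X ^ ((k : ℕ) + 1)) g
      = PowerSeries.C (R := F) (ε k) * g ^ ((k : ℕ) + 1) := fun k => by
    rw [pcomp_C_mul, pcomp_X_pow _ _ _ (binom_const F p c)]
  rw [Finset.sum_congr rfl fun k _ => h1 k, map_sum]
  have h2 : ∀ k : Fin (p - 2),
      lS F (PowerSeries.C (R := F) (ε k) * g ^ ((k : ℕ) + 1)) = HahnSeries.C (ε k) * G ^ ((k : ℕ) + 1) := by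
    intro k
    rw [map_mul, map_pow]
    congr 1
    exact HahnSeries.ofPowerSeries_C (ε k)
  rw [Finset.sum_congr rfl fun k _ => h2 k, mul_add, mul_one, Finset.mul_sum]
  have h3 : ∀ k : Fin (p - 2),
      G ^ (1 - (p : ℤ)) * (HahnSeries.C (ε k) * G ^ ((k : ℕ) + 1))
        = HahnSeries.C (ε k) * G ^ (2 - (p : ℤ) + (k : ℕ)) := fun k => by
    rw [mul_left_comm, ← zpow_natCast G ((k : ℕ) + 1), ← zpow_add₀ hG]
    norm_num
    ring_nf
  rw [Finset.sum_congr rfl fun k _ => h3 k]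
  simp only [act_T]
  rfl

lemma G_ne (A : LaurentSeries F)
    (h : (A * act F p c (T F (1 - (p : ℤ))) - T F (1 - (p : ℤ))).order = 2 - (p : ℤ)) :
    lS F (binomSeries F p c - 1) ≠ 0 := by
  intro hG
  rw [act_T, hG, zero_zpow _ (by have := (Fact.out : p.Prime).two_le; omega), mul_zero,
    zero_sub] at h
  have : (-T F (1 - (p : ℤ))) = HahnSeries.single (1 - (p : ℤ)) (-1 : F) := by
    rw [T]; ext n; simp [HahnSeries.coeff_single]
  rw [this, HahnSeries.order_single (neg_ne_zero.mpr one_ne_zero)] at h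
  omega


theorem main (p : ℕ) [Fact p.Prime] (hp2 : 2 < p) (F : Type) [Field F]
    [CharP F p] (c : PadicInt p) (A : LaurentSeries F)
    (hval1 : A * act F p c (T F (1 - (p : ℤ))) - T F (1 - (p : ℤ)) ≠ 0
      ∧ (A * act F p c (T F (1 - (p : ℤ))) - T F (1 - (p : ℤ))).order = 2 - (p : ℤ))
    (hval2 : ∀ s : ℤ, 2 - (p : ℤ) ≤ s → s ≤ -1 →
      A * act F p c (T F s) - T F s ≠ 0 ∧ (A * act F p c (T F s) - T F s).order = s) :
    ∃! ε : Fin (p - 2) → F,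
      valGE F
        (A * act F p c
              (T F (1 - (p : ℤ)) + ∑ k : Fin (p - 2), HahnSeries.C (ε k) * T F (2 - (p : ℤ) + (k : ℕ)))
          - (T F (1 - (p : ℤ)) + ∑ k : Fin (p - 2), HahnSeries.C (ε k) * T F (2 - (p : ℤ) + (k : ℕ))))
        0 := by
  have hG : lS F (binomSeries F p c - 1) ≠ 0 := G_ne F p c A hval1.2
  set w : LaurentSeries F := A * act F p c (T F (1 - (p : ℤ))) - T F (1 - (p : ℤ)) with hw
  set v : Fin (p - 2) → LaurentSeries F :=
    fun k => A * act F p c (T F (2 - (p : ℤ) + (k : ℕ))) - T F (2 - (p : ℤ) + (k : ℕ)) with hv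
  -- bounds for indices
  have hkb : ∀ k : Fin (p - 2), 2 - (p : ℤ) ≤ 2 - (p : ℤ) + (k : ℕ) ∧
      2 - (p : ℤ) + (k : ℕ) ≤ -1 := by
    intro k
    have h1 := k.isLt
    have h2 : ((k : ℕ) : ℤ) < ((p - 2 : ℕ) : ℤ) := by exact_mod_cast h1
    have h3 : ((p - 2 : ℕ) : ℤ) = (p : ℤ) - 2 := by
      have : 2 ≤ p := by omega
      push_cast [this]; ring
    constructor <;> omega
  have hvk := fun k : Fin (p - 2) => hval2 _ (hkb k).1 (hkb k).2
  -- key algebraic identity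
  have key : ∀ ε : Fin (p - 2) → F,
      A * act F p c
          (T F (1 - (p : ℤ)) + ∑ k : Fin (p - 2), HahnSeries.C (ε k) * T F (2 - (p : ℤ) + (k : ℕ)))
        - (T F (1 - (p : ℤ)) + ∑ k : Fin (p - 2), HahnSeries.C (ε k) * T F (2 - (p : ℤ) + (k : ℕ)))
      = w + ∑ k : Fin (p - 2), HahnSeries.C (ε k) * v k := by
    intro ε
    have hH : (T F (1 - (p : ℤ)) + ∑ k : Fin (p - 2),
        HahnSeries.C (ε k) * T F (2 - (p : ℤ) + (k : ℕ))) = Hfun F p ε := rfl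
    rw [hH, act_H F p c ε hG, Hfun]
    simp only [hw, hv, mul_add, mul_sub, Finset.mul_sum, Finset.sum_sub_distrib, mul_left_comm]
    abel
  -- coefficient formula
  have coeffEq : ∀ (ε : Fin (p - 2) → F) (n : ℤ),
      (w + ∑ k : Fin (p - 2), HahnSeries.C (ε k) * v k).coeff n
        = w.coeff n + ∑ k : Fin (p - 2), ε k * (v k).coeff n := by
    intro ε n
    rw [HahnSeries.coeff_add, sum_coeff]
    exact congrArg _ (Finset.sum_congr rfl fun k _ => C_mul_coeff F (ε k) (v k) n)
  -- vanishing facts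
  have hwlow : ∀ n : ℤ, n < 2 - (p : ℤ) → w.coeff n = 0 := fun n hn =>
    HahnSeries.coeff_eq_zero_of_lt_order (by rw [hval1.2]; exact hn)
  have hvlow : ∀ (k : Fin (p - 2)) (n : ℤ), n < 2 - (p : ℤ) + (k : ℕ) → (v k).coeff n = 0 :=
    fun k n hn => HahnSeries.coeff_eq_zero_of_lt_order (by rw [(hvk k).2]; exact hn)
  have hvdiag : ∀ k : Fin (p - 2), (v k).coeff (2 - (p : ℤ) + (k : ℕ)) ≠ 0 := fun k => by
    have := mt HahnSeries.coeff_order_eq_zero.mp (hvk k).1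
    rwa [(hvk k).2] at this
  -- the matrix
  set M : Matrix (Fin (p - 2)) (Fin (p - 2)) F :=
    fun j k => (v k).coeff (2 - (p : ℤ) + (j : ℕ)) with hM
  set b : Fin (p - 2) → F := fun j => - w.coeff (2 - (p : ℤ) + (j : ℕ)) with hb
  have hMtri : M.BlockTriangular OrderDual.toDual := by
    intro i j hij
    have hij' : i < j := hij
    exact hvlow j _ (by have : (i : ℕ) < (j : ℕ) := hij'; omega)
  have hdet : IsUnit M.det := by
    rw [Matrix.det_of_lowerTriangular M hMtri]
    exact (Finset.prod_ne_zero_iff.mpr fun j _ => hvdiag j).isUnit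
  -- equivalence with linear system
  have equiv : ∀ ε : Fin (p - 2) → F,
      valGE F (w + ∑ k : Fin (p - 2), HahnSeries.C (ε k) * v k) 0 ↔ M.mulVec ε = b := by
    intro ε
    constructor
    · intro h
      funext j
      have h0 := h (2 - (p : ℤ) + (j : ℕ)) (by have := (hkb j).2; omega)
      rw [coeffEq] at h0
      have : ∑ k : Fin (p - 2), ε k * (v k).coeff (2 - (p : ℤ) + (j : ℕ))
          = - w.coeff (2 - (p : ℤ) + (j : ℕ)) := eq_neg_of_add_eq_zero_left (by rw [add_comm] at h0; exact h0)
      rw [Matrix.mulVec, dotProduct]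
      rw [Finset.sum_congr rfl fun k _ => mul_comm (M j k) (ε k)]
      exact this
    · intro h n hn
      rw [coeffEq]
      by_cases hcase : n < 2 - (p : ℤ)
      · rw [hwlow n hcase, Finset.sum_eq_zero fun k _ => by
          rw [hvlow k n (by have : (0:ℤ) ≤ (k : ℕ) := Int.natCast_nonneg _; omega), mul_zero]]
        ring
      · push_neg at hcase
        set j : ℕ := (n - (2 - (p : ℤ))).toNat with hj
        have hjval : (j : ℤ) = n - (2 - (p : ℤ)) := Int.toNat_of_nonneg (by omega)
        have hjlt : j < p - 2 := by omega
        have h0 := congrFun h ⟨j, hjlt⟩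
        rw [Matrix.mulVec, dotProduct] at h0
        have hn' : n = 2 - (p : ℤ) + ((⟨j, hjlt⟩ : Fin (p - 2)) : ℕ) := by
          simp only [Fin.val_mk]; omega
        rw [hn']
        rw [Finset.sum_congr rfl fun k _ => mul_comm (ε k) ((v k).coeff _)]
        rw [show (∑ k : Fin (p-2), (v k).coeff (2 - (p:ℤ) + ((⟨j, hjlt⟩ : Fin (p-2)) : ℕ)) * ε k)
          = M.mulVec ε ⟨j, hjlt⟩ from rfl]
        rw [h]
        simp [hb]
  -- conclude
  refine ⟨M⁻¹.mulVec b, ?_, ?_⟩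
  · simp only [key]
    refine (equiv _).mpr ?_
    rw [Matrix.mulVec_mulVec, Matrix.mul_nonsing_inv M hdet, Matrix.one_mulVec]
  · intro ε hε
    simp only [key] at hε
    have h3 := (equiv ε).mp hε
    have h4 : M⁻¹.mulVec (M.mulVec ε) = M⁻¹.mulVec b := congrArg _ h3
    rwa [Matrix.mulVec_mulVec, Matrix.nonsing_inv_mul M hdet, Matrix.one_mulVec] at h4

end Aux

/-- existence and uniqueness of the `ε`'s killing the principal part. -/
theorem stmt_14 (p : ℕ) [Fact p.Prime] (hp2 : 2 < p) (F : Type) [Field F] [Fintype F]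
    [CharP F p] (f : ℕ) (hf : 1 ≤ f) (u : (PadicInt p)ˣ)
    (hgen : Dense ((Subgroup.zpowers u : Subgroup (PadicInt p)ˣ) : Set (PadicInt p)ˣ))
    (lam : PowerSeries F)
    (hlam0 : PowerSeries.constantCoeff (R := F) lam = 1)
    (hlam : lam ^ ((p ^ f - 1) / (p - 1)) *
        (PowerSeries.C (R := F) (redF F p (u : PadicInt p)) * PowerSeries.X)
      = binomSeries F p (u : PadicInt p) - 1)
    (S : ℤ)
    (hS : ∀ s : ℤ, ((2 - (p : ℤ) ≤ s ∧ s ≤ -1) ∨ s = 1 - (p : ℤ)) →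
      ¬ (p : ℤ) ∣ (S + s * (((p : ℤ) ^ f - 1) / ((p : ℤ) - 1))))
    (hval1 : lS F lam ^ S * act F p (u : PadicInt p) (T F (1 - (p : ℤ))) - T F (1 - (p : ℤ)) ≠ 0
      ∧ (lS F lam ^ S * act F p (u : PadicInt p) (T F (1 - (p : ℤ)))
          - T F (1 - (p : ℤ))).order = 2 - (p : ℤ))
    (hval2 : ∀ s : ℤ, 2 - (p : ℤ) ≤ s → s ≤ -1 →
      lS F lam ^ S * act F p (u : PadicInt p) (T F s) - T F s ≠ 0 ∧
        (lS F lam ^ S * act F p (u : PadicInt p) (T F s) - T F s).order = s) :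
    ∃! ε : Fin (p - 2) → F,
      valGE F
        (lS F lam ^ S *
            act F p (u : PadicInt p)
              (T F (1 - (p : ℤ)) + ∑ k : Fin (p - 2), HahnSeries.C (ε k) * T F (2 - (p : ℤ) + (k : ℕ)))
          - (T F (1 - (p : ℤ)) + ∑ k : Fin (p - 2), HahnSeries.C (ε k) * T F (2 - (p : ℤ) + (k : ℕ))))
        0 := by
  exact main p hp2 F (u : PadicInt p) (lS F lam ^ S) hval1 hval2
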